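/- Let X be a locally compact non-compact abelian group and let H, K be Banach X-modules over the group X, regarded as Banach modules with their canonical multiplier algebras M(H) and M(K). If T ∈ B(H,K) is of class C^u(Q;H,K), then T is decay preserving: T∘M ∈ B₀ˡ(H,K) for every M ∈ M(H) and M∘T ∈ B₀ʳ(H,K) for every M ∈ M(K). -/

import Mathlib

open ContinuousLinearMap

noncomputable section

/-- The space of continuous antilinear forms on `G` (the "adjoint space" `G*`). -/
abbrev AntiDual (G : Type*) [NormedAddCommGroup G] [NormedSpace ℂ G] : Type _ :=
  G →SL[starRingEnd ℂ] ℂ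

/-- Precomposition with `D : G →L E`, as a map `E* →L G*`; this is the adjoint `D*`. -/
def precompAntiDual {G E : Type*} [NormedAddCommGroup G] [NormedSpace ℂ G]
    [NormedAddCommGroup E] [NormedSpace ℂ E] (D : G →L[ℂ] E) :
    AntiDual E →L[ℂ] AntiDual G :=
  LinearMap.mkContinuous
    { toFun := fun w => w.comp D
      map_add' := fun w₁ w₂ => by ext u; simp
      map_smul' := fun c w => by ext u; simp }
    ‖D‖ (fun w => by
      calc ‖w.comp D‖ ≤ ‖w‖ * ‖D‖ := opNorm_comp_le _ _
      _ = ‖D‖ * ‖w‖ := mul_comm _ _)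

/-- Auxiliary: the element of the double antidual associated to `u`. -/
def doubleAntiDualAux {H : Type*} [NormedAddCommGroup H] [NormedSpace ℂ H] (u : H) :
    AntiDual (AntiDual H) :=
  LinearMap.mkContinuous
    { toFun := fun w : AntiDual H => starRingEnd ℂ (w u)
      map_add' := fun w₁ w₂ => by simp
      map_smul' := fun c w => by simp }
    ‖u‖ (fun w => by
      simp only [LinearMap.coe_mk, AddHom.coe_mk]
      calc ‖starRingEnd ℂ (w u)‖ = ‖w u‖ := by simp
      _ ≤ ‖w‖ * ‖u‖ := w.le_opNorm u
      _ = ‖u‖ * ‖w‖ := mul_comm _ _)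

theorem doubleAntiDualAux_norm_le {H : Type*} [NormedAddCommGroup H] [NormedSpace ℂ H]
    (u : H) : ‖doubleAntiDualAux u‖ ≤ ‖u‖ :=
  LinearMap.mkContinuous_norm_le _ (norm_nonneg u) _

/-- The canonical embedding of `H` into its double antidual `H**`,
`⟨v, u⟩ = conj ⟨u, v⟩`. -/
def doubleAntiDualEmb (H : Type*) [NormedAddCommGroup H] [NormedSpace ℂ H] :
    H →L[ℂ] AntiDual (AntiDual H) :=
  LinearMap.mkContinuous
    { toFun := fun u => doubleAntiDualAux u
      map_add' := fun u₁ u₂ => by ext w; simp [doubleAntiDualAux]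
      map_smul' := fun c u => by ext w; simp [doubleAntiDualAux] }
    1 (fun u => by simpa using doubleAntiDualAux_norm_le u)

/-- A Banach `X`-module over the group `X`: a strongly continuous representation of the
dual group by bounded invertible operators. -/
structure GroupRep (Xd : Type*) [Monoid Xd] [TopologicalSpace Xd]
    (H : Type*) [NormedAddCommGroup H] [NormedSpace ℂ H] where
  V : Xd →* (H →L[ℂ] H)ˣ
  strong_cont : ∀ u : H, Continuous fun k : Xd => (↑(V k) : H →L[ℂ] H) u

/-- The regularity class `C^u(Q; H, K)`: norm continuity of `k ↦ V_k⁻¹ S V_k`. -/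
def CuClass {Xd : Type*} [Monoid Xd] [TopologicalSpace Xd]
    {H K : Type*} [NormedAddCommGroup H] [NormedSpace ℂ H]
    [NormedAddCommGroup K] [NormedSpace ℂ K]
    (WH : GroupRep Xd H) (WK : GroupRep Xd K) (S : H →L[ℂ] K) : Prop :=
  Continuous fun k : Xd =>
    (↑(WK.V k)⁻¹ : K →L[ℂ] K).comp (S.comp (↑(WH.V k) : H →L[ℂ] H))


variable {H K : Type*}

/-- `M` is the multiplier algebra of a Banach module structure on `H`: a non-degenerate
norm-closed subalgebra of `B(H)` possessing a bounded approximate unit. -/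
structure IsBanachModule (H : Type*) [NormedAddCommGroup H] [NormedSpace ℂ H]
    (M : Set (H →L[ℂ] H)) : Prop where
  zero_mem : (0 : H →L[ℂ] H) ∈ M
  add_mem : ∀ {A B : H →L[ℂ] H}, A ∈ M → B ∈ M → A + B ∈ M
  smul_mem : ∀ (c : ℂ) {A : H →L[ℂ] H}, A ∈ M → c • A ∈ M
  mul_mem : ∀ {A B : H →L[ℂ] H}, A ∈ M → B ∈ M → A.comp B ∈ M
  isClosed : IsClosed M
  nondegenerate : Dense (↑(Submodule.span ℂ {u : H | ∃ A ∈ M, ∃ v : H, u = A v}) : Set H)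
  approx_unit : ∃ C : ℝ, ∀ ε > (0 : ℝ), ∀ F : Finset (H →L[ℂ] H), ↑F ⊆ M →
    ∃ J ∈ M, ‖J‖ ≤ C ∧ ∀ A ∈ F, ‖J.comp A - A‖ ≤ ε ∧ ‖A.comp J - A‖ ≤ ε

/-- A Hilbert module: a Banach module on a Hilbert space whose multiplier algebra is a
C*-algebra of operators (i.e. is moreover closed under adjoints). -/
structure IsHilbertModule (H : Type*) [NormedAddCommGroup H] [InnerProductSpace ℂ H]
    [CompleteSpace H] (M : Set (H →L[ℂ] H)) extends IsBanachModule H M : Prop where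
  star_mem : ∀ {A : H →L[ℂ] H}, A ∈ M → ContinuousLinearMap.adjoint A ∈ M

/-- `B₀ˡ(H,K)`: the closed linear span of the operators `A ∘ T` with `A` in the multiplier
algebra of `K` and `T ∈ B(H,K)` (operators left vanishing at infinity). -/
def B0l [NormedAddCommGroup H] [NormedSpace ℂ H] [NormedAddCommGroup K] [NormedSpace ℂ K]
    (MK : Set (K →L[ℂ] K)) : Set (H →L[ℂ] K) :=
  closure (↑(Submodule.span ℂ
    {S : H →L[ℂ] K | ∃ A ∈ MK, ∃ T : H →L[ℂ] K, S = A.comp T}) : Set (H →L[ℂ] K))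

/-- `B₀ʳ(H,K)`: the closed linear span of the operators `T ∘ A` with `A` in the multiplier
algebra of `H` and `T ∈ B(H,K)` (operators right vanishing at infinity). -/
def B0r [NormedAddCommGroup H] [NormedSpace ℂ H] [NormedAddCommGroup K] [NormedSpace ℂ K]
    (MH : Set (H →L[ℂ] H)) : Set (H →L[ℂ] K) :=
  closure (↑(Submodule.span ℂ
    {S : H →L[ℂ] K | ∃ A ∈ MH, ∃ T : H →L[ℂ] K, S = T.comp A}) : Set (H →L[ℂ] K))

/-- `S ∈ B(H,K)` is left decay preserving. -/
def LeftDecayPreserving [NormedAddCommGroup H] [NormedSpace ℂ H] [NormedAddCommGroup K]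
    [NormedSpace ℂ K] (MH : Set (H →L[ℂ] H)) (MK : Set (K →L[ℂ] K))
    (S : H →L[ℂ] K) : Prop :=
  ∀ A ∈ MH, S.comp A ∈ B0l MK

/-- `S ∈ B(H,K)` is right decay preserving. -/
def RightDecayPreserving [NormedAddCommGroup H] [NormedSpace ℂ H] [NormedAddCommGroup K]
    [NormedSpace ℂ K] (MH : Set (H →L[ℂ] H)) (MK : Set (K →L[ℂ] K))
    (S : H →L[ℂ] K) : Prop :=
  ∀ A ∈ MK, A.comp S ∈ B0r MH

open MeasureTheory

/-- The canonical multiplier algebra of a Banach `X`-module over the group `X`: the norm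
closure of the set of operators `ψ(V) = ∫ ψ(k) V_k dk`, `ψ ∈ L¹` with compact support. -/
def repMult {Xd : Type*} [Monoid Xd] [TopologicalSpace Xd] [MeasurableSpace Xd]
    {H : Type*} [NormedAddCommGroup H] [NormedSpace ℂ H] [CompleteSpace H]
    (W : GroupRep Xd H) (μ : Measure Xd) : Set (H →L[ℂ] H) :=
  closure {A : H →L[ℂ] H | ∃ ψ : Xd → ℂ, Integrable ψ μ ∧ HasCompactSupport ψ ∧
    ∀ u : H, A u = ∫ k, ψ k • ((↑(W.V k) : H →L[ℂ] H) u) ∂μ}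

/-! With `F k = V_k⁻¹ T V_k` norm-continuous, `T ψ(V) = ∫ ψ(k) V_k F(k) dk`. Cut the compact
support of `ψ` into finitely many measurable pieces `Ωᵢ` on which `F` moves by less than `δ`;
replacing `F` by a value `F(pᵢ)` on each `Ωᵢ` costs `O(δ)` in operator norm, and the resulting
operator `∑ᵢ (1_{Ωᵢ} ψ)(V) F(pᵢ)` lies in the span generating `B₀ˡ`. Symmetrically
`ψ(V) T = ∫ ψ(k) F(k⁻¹) V_k dk` is approximated by `∑ᵢ F(pᵢ⁻¹) (1_{Ωᵢ} ψ)(V) ∈ B₀ʳ`. Both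
statements pass to the norm closures `M(H)`, `M(K)` because composition with `T` is continuous. -/

section Approximation

open Set Filter Topology Function

variable {α : Type*} [MeasurableSpace α]

lemma norm_integral_sub_sum_integral_indicator_le {E : Type*} [NormedAddCommGroup E]
    [NormedSpace ℂ E] {μ : Measure α} {ι : Type*} [Fintype ι] {ψ : α → ℂ} (hψ : Integrable ψ μ)
    {Ω : ι → Set α} (hΩ : Pairwise (Disjoint on Ω)) (hcov : support ψ ⊆ ⋃ i, Ω i)
    {g : α → E} {g' : ι → α → E} (hg : Integrable (fun k => ψ k • g k) μ)
    (hg' : ∀ i, Integrable (fun k => (Ω i).indicator ψ k • g' i k) μ) {η : ℝ}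
    (hη : ∀ i, ∀ k ∈ Ω i, ‖g k - g' i k‖ ≤ η) :
    ‖∫ k, ψ k • g k ∂μ - ∑ i, ∫ k, (Ω i).indicator ψ k • g' i k ∂μ‖
      ≤ (∫ k, ‖ψ k‖ ∂μ) * η := by
  rw [← integral_finsetSum _ fun i _ => hg' i,
    ← integral_sub hg (integrable_finsetSum _ fun i _ => hg' i), ← integral_mul_const]
  refine norm_integral_le_of_norm_le (hψ.norm.mul_const η) (Eventually.of_forall fun k => ?_)
  by_cases hk : ψ k = 0
  · simp [hk, indicator_apply_eq_zero.2 fun _ => hk]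
  obtain ⟨j, hj⟩ := mem_iUnion.1 (hcov hk)
  have hsum : ∑ i, (Ω i).indicator ψ k • g' i k = ψ k • g' j k := by
    rw [Finset.sum_eq_single j (fun i _ hij => ?_) (by simp), indicator_of_mem hj]
    rw [indicator_of_notMem (disjoint_right.1 (hΩ hij) hj), zero_smul]
  rw [hsum, ← smul_sub, norm_smul]
  exact mul_le_mul_of_nonneg_left (hη j k hj) (norm_nonneg _)

variable [TopologicalSpace α] [OpensMeasurableSpace α]

lemma IsCompact.exists_measurable_partition_dist_lt {β : Type*}
    [PseudoMetricSpace β] {Q : Set α} (hQ : IsCompact Q) (hQm : MeasurableSet Q) {f : α → β}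
    (hf : Continuous f) {δ : ℝ} (hδ : 0 < δ) :
    ∃ (n : ℕ) (p : Fin n → α) (Ω : Fin n → Set α), (∀ i, MeasurableSet (Ω i)) ∧
      Pairwise (Disjoint on Ω) ∧ (∀ i, Ω i ⊆ Q) ∧ Q ⊆ ⋃ i, Ω i ∧
      ∀ i, ∀ x ∈ Ω i, dist (f x) (f (p i)) < δ := by
  have hU : ∀ x, IsOpen (f ⁻¹' Metric.ball (f x) δ) := fun x => Metric.isOpen_ball.preimage hf
  obtain ⟨t, ht⟩ := hQ.elim_finite_subcover _ hU
    fun x _ => mem_iUnion.2 ⟨x, Metric.mem_ball_self hδ⟩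
  let p : Fin t.card → α := fun i => t.equivFin.symm i
  let V : Fin t.card → Set α := fun i => Q ∩ f ⁻¹' Metric.ball (f (p i)) δ
  have hVm : ∀ i, MeasurableSet (V i) := fun i => hQm.inter (hU _).measurableSet
  refine ⟨t.card, p, disjointed V, fun i => disjointedRec (fun _ j hs => hs.diff (hVm j)) (hVm i),
    disjoint_disjointed V, fun i => (disjointed_subset V i).trans inter_subset_left, ?_,
    fun i x hx => (disjointed_subset V i hx).2⟩
  rw [iUnion_disjointed]
  intro x hx
  obtain ⟨y, hy, hxy⟩ := mem_iUnion₂.1 (ht hx)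
  exact mem_iUnion.2 ⟨t.equivFin ⟨y, hy⟩, hx, by simpa [p] using hxy⟩

lemma MeasureTheory.Integrable.smul_continuous_of_hasCompactSupport {E : Type*}
    [NormedAddCommGroup E] [NormedSpace ℂ E] {μ : Measure α} {ψ : α → ℂ} (hψ : Integrable ψ μ)
    (hcs : HasCompactSupport ψ) {g : α → E} (hg : Continuous g) :
    Integrable (fun k => ψ k • g k) μ := by
  have hQm : MeasurableSet (tsupport ψ) := (isClosed_tsupport ψ).measurableSet
  obtain ⟨C, hC⟩ := IsCompact.exists_bound_of_continuousOn hcs hg.continuousOn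
  have hgQ : IntegrableOn (fun k => ψ k • g k) (tsupport ψ) μ :=
    hψ.integrableOn.smul_bdd C (hg.continuousOn.aestronglyMeasurable_of_isCompact hcs hQm)
      ((ae_restrict_iff' hQm).2 (Eventually.of_forall hC))
  exact (integrableOn_iff_integrable_of_support_subset
    ((support_smul_subset_left _ _).trans (subset_tsupport ψ))).1 hgQ

lemma exists_clm_apply_eq_integral_smul {E F : Type*}
    [NormedAddCommGroup E] [NormedSpace ℂ E] [NormedAddCommGroup F] [NormedSpace ℂ F]
    {μ : Measure α} {ψ : α → ℂ} (hψ : Integrable ψ μ) (hcs : HasCompactSupport ψ)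
    {L : α → E →L[ℂ] F} (hL : ∀ u, Continuous fun k => L k u) {c : ℝ}
    (hc : ∀ k ∈ tsupport ψ, ‖L k‖ ≤ c) :
    ∃ D : E →L[ℂ] F, ∀ u, D u = ∫ k, ψ k • L k u ∂μ := by
  have hint : ∀ u, Integrable (fun k => ψ k • L k u) μ := fun u =>
    hψ.smul_continuous_of_hasCompactSupport hcs (hL u)
  have hbound : ∀ u k, ‖ψ k • L k u‖ ≤ ‖ψ k‖ * (c * ‖u‖) := fun u k => by
    by_cases hk : k ∈ tsupport ψ
    · rw [norm_smul]
      exact mul_le_mul_of_nonneg_left ((L k).le_of_opNorm_le (hc k hk) u) (norm_nonneg _)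
    · simp [image_eq_zero_of_notMem_tsupport hk]
  refine ⟨LinearMap.mkContinuous
    { toFun := fun u => ∫ k, ψ k • L k u ∂μ
      map_add' := fun u v => by simp only [map_add, smul_add, integral_add (hint u) (hint v)]
      map_smul' := fun a u => by simp only [map_smul, smul_comm (ψ _) a, integral_smul]; rfl }
    ((∫ k, ‖ψ k‖ ∂μ) * c) fun u => ?_, fun u => rfl⟩
  calc ‖∫ k, ψ k • L k u ∂μ‖ ≤ ∫ k, ‖ψ k‖ * (c * ‖u‖) ∂μ :=
        norm_integral_le_of_norm_le (hψ.norm.mul_const _) (Eventually.of_forall (hbound u))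
    _ = (∫ k, ‖ψ k‖ ∂μ) * c * ‖u‖ := by rw [integral_mul_const, mul_assoc]

lemma mem_closure_span_integral_smul {P E F : Type*} [NormedAddCommGroup P] [NormedSpace ℂ P]
    [NormedAddCommGroup E] [NormedSpace ℂ E] [NormedAddCommGroup F] [NormedSpace ℂ F]
    {μ : Measure α} {ψ : α → ℂ} (hψ : Integrable ψ μ) (hcs : HasCompactSupport ψ)
    {B : α → P →L[ℂ] E →L[ℂ] F} (hB : ∀ y u, Continuous fun k => B k y u) {c : ℝ} (hc0 : 0 ≤ c)
    (hc : ∀ k ∈ tsupport ψ, ‖B k‖ ≤ c) {Φ : α → P} (hΦ : Continuous Φ)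
    (hBΦ : ∀ u, Continuous fun k => B k (Φ k) u) {C : E →L[ℂ] F}
    (hC : ∀ u, C u = ∫ k, ψ k • B k (Φ k) u ∂μ) :
    C ∈ closure (Submodule.span ℂ {D : E →L[ℂ] F | ∃ φ : α → ℂ, Integrable φ μ ∧
      HasCompactSupport φ ∧ ∃ y, ∀ u, D u = ∫ k, φ k • B k y u ∂μ} : Set (E →L[ℂ] F)) := by
  rw [Metric.mem_closure_iff]
  intro ε hε
  set I := ∫ k, ‖ψ k‖ ∂μ
  obtain ⟨δ, hδ, hδε⟩ := exists_pos_mul_lt hε (I * c)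
  obtain ⟨n, p, Ω, hΩm, hΩd, hΩQ, hQΩ, hΦp⟩ :=
    IsCompact.exists_measurable_partition_dist_lt hcs (isClosed_tsupport ψ).measurableSet hΦ hδ
  have hψΩ : ∀ i, Integrable ((Ω i).indicator ψ) μ := fun i => hψ.indicator (hΩm i)
  have hsuppΩ : ∀ i, support ((Ω i).indicator ψ) ⊆ support ψ := fun _ =>
    support_indicator.subset.trans inter_subset_right
  have hcsΩ : ∀ i, HasCompactSupport ((Ω i).indicator ψ) := fun i => hcs.mono (hsuppΩ i)
  have hD : ∀ i, ∃ D : E →L[ℂ] F, ∀ u, D u = ∫ k, (Ω i).indicator ψ k • B k (Φ (p i)) u ∂μ :=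
    fun i => exists_clm_apply_eq_integral_smul (hψΩ i) (hcsΩ i) (hB _) (c := c * ‖Φ (p i)‖)
      fun k hk => (B k).le_of_opNorm_le (hc k (closure_mono (hsuppΩ i) hk)) _
  choose D hD using hD
  refine ⟨∑ i, D i, Submodule.sum_mem _ fun i _ =>
    Submodule.subset_span ⟨_, hψΩ i, hcsΩ i, _, hD i⟩, ?_⟩
  rw [dist_eq_norm]
  refine lt_of_le_of_lt (opNorm_le_bound _ (by positivity) fun u => ?_) hδε
  rw [sub_apply, sum_apply, hC]
  simp_rw [hD]
  calc _ ≤ I * (c * δ * ‖u‖) :=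
        norm_integral_sub_sum_integral_indicator_le hψ hΩd ((subset_tsupport ψ).trans hQΩ)
          (hψ.smul_continuous_of_hasCompactSupport hcs (hBΦ u))
          (fun i => (hψΩ i).smul_continuous_of_hasCompactSupport (hcsΩ i) (hB _ u))
          fun i k hk => ?_
    _ = I * c * δ * ‖u‖ := by ring
  rw [← sub_apply, ← map_sub]
  refine ((B k).le_opNorm₂ _ _).trans ?_
  gcongr
  · exact hc k (hΩQ i hk)
  · rw [← dist_eq_norm]; exact (hΦp i k hk).le

end Approximation

namespace GroupRep

open Filter Topology

variable {Γ E : Type*} [TopologicalSpace Γ] [NormedAddCommGroup E] [NormedSpace ℂ E]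
  [CompleteSpace E]

lemma exists_norm_le_of_isCompact [Monoid Γ] (W : GroupRep Γ E) {Q : Set Γ} (hQ : IsCompact Q) :
    ∃ c, 0 ≤ c ∧ ∀ k ∈ Q, ‖(W.V k : E →L[ℂ] E)‖ ≤ c := by
  obtain ⟨c, hc⟩ := banach_steinhaus (g := fun k : Q => (W.V k : E →L[ℂ] E)) fun u =>
    (hQ.image (W.strong_cont u).norm).bddAbove.imp fun _ hc k => hc ⟨k, k.2, rfl⟩
  exact ⟨max c 0, le_max_right _ _, fun k hk => (hc ⟨k, hk⟩).trans (le_max_left _ _)⟩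

lemma continuous_apply_of_continuous [Monoid Γ] [LocallyCompactSpace Γ] (W : GroupRep Γ E)
    {v : Γ → E} (hv : Continuous v) : Continuous fun k => (W.V k : E →L[ℂ] E) (v k) := by
  refine continuous_iff_continuousAt.2 fun k₀ => ?_
  obtain ⟨N, hN, hN₀⟩ := exists_compact_mem_nhds k₀
  obtain ⟨c, -, hc⟩ := W.exists_norm_le_of_isCompact hN
  have hsmall : Tendsto (fun k => (W.V k : E →L[ℂ] E) (v k - v k₀)) (𝓝 k₀) (𝓝 0) := by
    refine squeeze_zero_norm' ?_ (by
      simpa using ((hv.sub (continuous_const (y := v k₀))).norm.const_mul c).tendsto k₀)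
    filter_upwards [hN₀] with k hk
    exact (W.V k : E →L[ℂ] E).le_of_opNorm_le (hc k hk) _
  simpa [ContinuousAt] using hsmall.add ((W.strong_cont (v k₀)).tendsto k₀)

variable [MeasurableSpace Γ] [OpensMeasurableSpace Γ]

lemma exists_clm_apply_eq_integral_smul [Monoid Γ] (W : GroupRep Γ E) (μ : Measure Γ)
    {ψ : Γ → ℂ} (hψ : Integrable ψ μ) (hcs : HasCompactSupport ψ) :
    ∃ A : E →L[ℂ] E, ∀ u, A u = ∫ k, ψ k • (W.V k : E →L[ℂ] E) u ∂μ :=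
  have ⟨_, _, hc⟩ := W.exists_norm_le_of_isCompact hcs
  _root_.exists_clm_apply_eq_integral_smul hψ hcs W.strong_cont hc

end GroupRep

namespace ContinuousLinearMap

variable {R M : Type*} [Semiring R] [TopologicalSpace M] [AddCommMonoid M] [Module R M]

@[simp]
lemma units_apply_inv_apply (a : (M →L[R] M)ˣ) (x : M) :
    (a : M →L[R] M) ((↑a⁻¹ : M →L[R] M) x) = x := by
  rw [← mul_apply_eq_comp, Units.mul_inv, one_apply_eq_self]

@[simp]
lemma units_inv_apply_apply (a : (M →L[R] M)ˣ) (x : M) :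
    (↑a⁻¹ : M →L[R] M) ((a : M →L[R] M) x) = x := by
  rw [← mul_apply_eq_comp, Units.inv_mul, one_apply_eq_self]

end ContinuousLinearMap

section DecayPreserving

variable {Γ : Type*} [TopologicalSpace Γ] [Group Γ] [MeasurableSpace Γ] [OpensMeasurableSpace Γ]
  {H K : Type*} [NormedAddCommGroup H] [NormedSpace ℂ H] [CompleteSpace H]
  [NormedAddCommGroup K] [NormedSpace ℂ K] [CompleteSpace K]
  {WH : GroupRep Γ H} {WK : GroupRep Γ K} {T : H →L[ℂ] K}

lemma CuClass.comp_mem_B0l [LocallyCompactSpace Γ] (hT : CuClass WH WK T) (μ : Measure Γ)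
    {ψ : Γ → ℂ} (hψ : Integrable ψ μ) (hcs : HasCompactSupport ψ) {A : H →L[ℂ] H}
    (hA : ∀ u, A u = ∫ k, ψ k • (WH.V k : H →L[ℂ] H) u ∂μ) :
    T.comp A ∈ B0l (repMult WK μ) := by
  obtain ⟨c, hc0, hc⟩ := WK.exists_norm_le_of_isCompact hcs
  refine closure_mono (Submodule.span_mono ?_) (mem_closure_span_integral_smul hψ hcs
    (B := fun k => compL ℂ H K K (WK.V k)) (fun y u => WK.strong_cont (y u)) hc0
    (fun k hk => opNorm_le_bound _ hc0 fun y =>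
      (opNorm_comp_le _ _).trans (by gcongr; exact hc k hk))
    hT (fun u => WK.continuous_apply_of_continuous (hT.clm_apply continuous_const))
    (C := T.comp A) fun u => ?_)
  · rintro D ⟨φ, hφ, hcsφ, y, hD⟩
    obtain ⟨A', hA'⟩ := WK.exists_clm_apply_eq_integral_smul μ hφ hcsφ
    exact ⟨A', subset_closure ⟨φ, hφ, hcsφ, hA'⟩, y, ext fun u => by simp [hD, hA']⟩
  · rw [ContinuousLinearMap.comp_apply, hA, ← integral_comp_comm _
      (hψ.smul_continuous_of_hasCompactSupport hcs (WH.strong_cont u))]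
    simp

lemma CuClass.mem_B0r_comp [ContinuousInv Γ] (hT : CuClass WH WK T) (μ : Measure Γ)
    {ψ : Γ → ℂ} (hψ : Integrable ψ μ) (hcs : HasCompactSupport ψ) {A : K →L[ℂ] K}
    (hA : ∀ u, A u = ∫ k, ψ k • (WK.V k : K →L[ℂ] K) u ∂μ) :
    A.comp T ∈ B0r (repMult WH μ) := by
  obtain ⟨c, hc0, hc⟩ := WH.exists_norm_le_of_isCompact hcs
  have hΦ : Continuous fun k =>
      (↑(WK.V k⁻¹)⁻¹ : K →L[ℂ] K).comp (T.comp (WH.V k⁻¹ : H →L[ℂ] H)) := hT.comp continuous_inv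
  refine closure_mono (Submodule.span_mono ?_) (mem_closure_span_integral_smul hψ hcs
    (B := fun k => (compL ℂ H H K).flip (WH.V k))
    (fun y u => y.continuous.comp (WH.strong_cont u)) hc0
    (fun k hk => opNorm_le_bound _ hc0 fun y =>
      (opNorm_comp_le _ _).trans (by rw [mul_comm]; gcongr; exact hc k hk))
    hΦ (fun u => hΦ.clm_apply (WH.strong_cont u)) (C := A.comp T) fun u => ?_)
  · rintro D ⟨φ, hφ, hcsφ, y, hD⟩
    obtain ⟨A', hA'⟩ := WH.exists_clm_apply_eq_integral_smul μ hφ hcsφ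
    refine ⟨A', subset_closure ⟨φ, hφ, hcsφ, hA'⟩, y, ext fun u => ?_⟩
    rw [hD, ContinuousLinearMap.comp_apply, hA', ← integral_comp_comm _
      (hφ.smul_continuous_of_hasCompactSupport hcsφ (WH.strong_cont u))]
    simp
  · rw [ContinuousLinearMap.comp_apply, hA]
    simp

lemma CuClass.leftDecayPreserving [LocallyCompactSpace Γ] (hT : CuClass WH WK T)
    (μ : Measure Γ) : LeftDecayPreserving (repMult WH μ) (repMult WK μ) T := by
  refine fun A hA => closure_minimal ?_ (isClosed_closure.preimage (compL ℂ H H K T).continuous) hA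
  rintro A ⟨ψ, hψ, hcs, hA⟩
  exact hT.comp_mem_B0l μ hψ hcs hA

lemma CuClass.rightDecayPreserving [ContinuousInv Γ] (hT : CuClass WH WK T) (μ : Measure Γ) :
    RightDecayPreserving (repMult WH μ) (repMult WK μ) T := by
  refine fun A hA =>
    closure_minimal ?_ (isClosed_closure.preimage ((compL ℂ H K K).flip T).continuous) hA
  rintro A ⟨ψ, hψ, hcs, hA⟩
  exact hT.mem_B0r_comp μ hψ hcs hA

end DecayPreserving

theorem stmt8 {X : Type*} [TopologicalSpace X] [CommGroup X] [IsTopologicalGroup X]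
    [LocallyCompactSpace X]
    [MeasurableSpace (PontryaginDual X)] [BorelSpace (PontryaginDual X)]
    (μ : Measure (PontryaginDual X))
    {H K : Type*} [NormedAddCommGroup H] [NormedSpace ℂ H] [CompleteSpace H]
    [NormedAddCommGroup K] [NormedSpace ℂ K] [CompleteSpace K]
    (WH : GroupRep (PontryaginDual X) H) (WK : GroupRep (PontryaginDual X) K)
    (T : H →L[ℂ] K) (hT : CuClass WH WK T) :
    LeftDecayPreserving (repMult WH μ) (repMult WK μ) T ∧
    RightDecayPreserving (repMult WH μ) (repMult WK μ) T :=
  ⟨hT.leftDecayPreserving μ, hT.rightDecayPreserving μ⟩
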